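/- arXiv:2211.02743 — 2 statements merged into one kernel-verified Lean document; each statement's English description precedes it below -/
import Mathlib

section
/- Let Φ denote the standard normal CDF. Fix σ₂ > σ₁ > 0 and ρ ∈ (0,1), and set c* = ρσ₂/(σ₁+2ρσ₂) and c** = σ₂/(ρσ₁+2σ₂). Then c* < c**, and for every μ > 0 and every c ∈ (c*, c**): 1 - (1/2)Φ((1-c)μ/(σ₁+ρσ₂)) - (1/2)Φ(-cμ/(ρσ₂)) > 1/2 > 1 - (1/2)Φ((1-c)μ/(ρσ₁+σ₂)) - (1/2)Φ(-cμ/σ₂). That is, with equal weights, for c strictly between the two cutoffs, discovering the disfavored project 1 beats no discovery, which in turn beats discovering the consensus project 2, at every precision level μ. -/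
open MeasureTheory ProbabilityTheory Filter Set

/-- The standard normal cumulative distribution function. -/
noncomputable def Phi (x : ℝ) : ℝ := cdf (gaussianReal 0 1) x

lemma gauss_neg_map : (gaussianReal 0 1).map ((-1 : ℝ) * ·) = gaussianReal 0 1 := by
  rw [gaussianReal_map_const_mul]
  norm_num

instance : NullSingletonClass (gaussianReal 0 1) :=
  ⟨fun x => gaussianReal_absolutelyContinuous 0 (by norm_num) (by simp)⟩

lemma Phi_neg (x : ℝ) : Phi (-x) = 1 - Phi x := by
  have h1 : Phi (-x) = ((gaussianReal 0 1) (Iic (-x))).toReal := cdf_eq_real _ _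
  have h2 : Phi x = ((gaussianReal 0 1) (Iic x)).toReal := cdf_eq_real _ _
  have hmap : (gaussianReal 0 1) (Iic (-x)) = (gaussianReal 0 1) (Ici x) := by
    conv_lhs => rw [← gauss_neg_map]
    rw [Measure.map_apply (by fun_prop) measurableSet_Iic]
    congr 1
    ext y
    simp only [mem_preimage, mem_Iic, mem_Ici]
    constructor <;> intro h <;> linarith
  have hIci : (gaussianReal 0 1) (Ici x) = (gaussianReal 0 1) (Ioi x) :=
    (measure_congr (Ioi_ae_eq_Ici (μ := gaussianReal 0 1) (a := x))).symm
  have hcompl : (gaussianReal 0 1) (Ioi x) = 1 - (gaussianReal 0 1) (Iic x) := by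
    rw [← Set.compl_Iic, measure_compl measurableSet_Iic (measure_ne_top _ _)]
    simp
  rw [h1, h2, hmap, hIci, hcompl, ENNReal.toReal_sub_of_le (prob_le_one) (by simp)]
  simp

lemma Phi_strictMono : StrictMono Phi := by
  intro x y hxy
  have h1 : Phi x = ((gaussianReal 0 1) (Iic x)).toReal := cdf_eq_real _ _
  have h2 : Phi y = ((gaussianReal 0 1) (Iic y)).toReal := cdf_eq_real _ _
  have hne : (gaussianReal 0 1) (Ioc x y) ≠ 0 := by
    intro h
    have := gaussianReal_absolutelyContinuous' 0 (v := 1) (by norm_num) h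
    rw [Real.volume_Ioc] at this
    rw [ENNReal.ofReal_eq_zero] at this
    linarith
  have hsplit : (gaussianReal 0 1) (Iic x) + (gaussianReal 0 1) (Ioc x y)
      = (gaussianReal 0 1) (Iic y) := by
    rw [← measure_union (by exact Set.Iic_disjoint_Ioc le_rfl) measurableSet_Ioc,
      Set.Iic_union_Ioc_eq_Iic hxy.le]
  rw [h1, h2, ← hsplit, ENNReal.toReal_add (measure_ne_top _ _) (measure_ne_top _ _)]
  have : 0 < ((gaussianReal 0 1) (Ioc x y)).toReal :=
    ENNReal.toReal_pos hne (measure_ne_top _ _)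
  linarith

/-- With equal weights and `σ₁ < σ₂`, `c* < c**`, and for any `c` strictly between
the cutoffs, at every precision `μ`: discovering the disfavored project 1 beats
no discovery (payoff `1/2`), which beats discovering the consensus project 2. -/
theorem intermediate_c_ordering
    (σ₁ σ₂ ρ : ℝ) (hσ₁ : 0 < σ₁) (hσ : σ₁ < σ₂) (hρ : ρ ∈ Set.Ioo (0 : ℝ) 1) :
    ρ * σ₂ / (σ₁ + 2 * ρ * σ₂) < σ₂ / (ρ * σ₁ + 2 * σ₂) ∧
    ∀ μ : ℝ, 0 < μ →
      ∀ c ∈ Set.Ioo (ρ * σ₂ / (σ₁ + 2 * ρ * σ₂)) (σ₂ / (ρ * σ₁ + 2 * σ₂)),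
        1 - 1 / 2 * Phi ((1 - c) * μ / (σ₁ + ρ * σ₂))
            - 1 / 2 * Phi (-c * μ / (ρ * σ₂)) > 1 / 2 ∧
        (1 : ℝ) / 2 > 1 - 1 / 2 * Phi ((1 - c) * μ / (ρ * σ₁ + σ₂))
            - 1 / 2 * Phi (-c * μ / σ₂) := by
  obtain ⟨hρ0, hρ1⟩ := hρ
  have hσ₂ : 0 < σ₂ := hσ₁.trans hσ
  have hd1 : 0 < σ₁ + 2 * ρ * σ₂ := by positivity
  have hd2 : 0 < ρ * σ₁ + 2 * σ₂ := by positivity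
  have hcc : ρ * σ₂ / (σ₁ + 2 * ρ * σ₂) < σ₂ / (ρ * σ₁ + 2 * σ₂) := by
    rw [div_lt_div_iff₀ hd1 hd2]
    nlinarith [mul_pos (mul_pos hσ₁ hσ₂) (show (0:ℝ) < 1 - ρ^2 by nlinarith)]
  refine ⟨hcc, fun μ hμ c hc => ?_⟩
  obtain ⟨hc1, hc2⟩ := hc
  constructor
  · -- Π¹ > 1/2 : need a < -b with a = (1-c)μ/(σ₁+ρσ₂), -b = cμ/(ρσ₂)
    have hA : 0 < σ₁ + ρ * σ₂ := by positivity
    have hB : 0 < ρ * σ₂ := by positivity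
    have hab : (1 - c) * μ / (σ₁ + ρ * σ₂) < c * μ / (ρ * σ₂) := by
      rw [div_lt_div_iff₀ hA hB]
      rw [div_lt_iff₀ hd1] at hc1
      nlinarith
    have := Phi_strictMono hab
    rw [show c * μ / (ρ * σ₂) = -(-c * μ / (ρ * σ₂)) by ring] at this
    rw [Phi_neg] at this
    linarith
  · have hA : 0 < ρ * σ₁ + σ₂ := by positivity
    have hab : c * μ / σ₂ < (1 - c) * μ / (ρ * σ₁ + σ₂) := by
      rw [div_lt_div_iff₀ hσ₂ hA]
      rw [lt_div_iff₀ hd2] at hc2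
      nlinarith
    have := Phi_strictMono hab
    rw [show c * μ / σ₂ = -(-c * μ / σ₂) by ring, Phi_neg] at this
    linarith
end

section
/- Let Φ denote the standard normal CDF. Fix σ₂ > σ₁ > 0, ρ ∈ (0,1), and c ∈ (c**, 1) where c** = σ₂/(ρσ₁ + 2σ₂). Then there exists M > 0 such that for all μ > M: Φ((1-c)μ/(σ₁+ρσ₂)) + Φ(-cμ/(ρσ₂)) > Φ((1-c)μ/(ρσ₁+σ₂)) + Φ(-cμ/σ₂); that is, with equal weights the payoff from discovering the consensus project 2 eventually exceeds the payoff from discovering the disfavored project 1 as the prior precision μ grows. -/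
open MeasureTheory ProbabilityTheory Filter

open Real Set in
lemma Phi_eq_integral (x : ℝ) :
    Phi x = ∫ t in Set.Iic x, gaussianPDFReal 0 1 t := by
  unfold Phi
  rw [cdf_eq_real, measureReal_def, gaussianReal_apply_eq_integral 0 one_ne_zero, ENNReal.toReal_ofReal]
  exact setIntegral_nonneg measurableSet_Iic (fun t _ => gaussianPDFReal_nonneg _ _ _)

open Real Set in
lemma Phi_sub {x y : ℝ} (h : x ≤ y) :
    Phi y - Phi x = ∫ t in Set.Ioc x y, gaussianPDFReal 0 1 t := by
  rw [Phi_eq_integral, Phi_eq_integral, ← Set.Iic_union_Ioc_eq_Iic h,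
    setIntegral_union (Set.Iic_disjoint_Ioc le_rfl) measurableSet_Ioc
      (integrable_gaussianPDFReal 0 1).integrableOn
      (integrable_gaussianPDFReal 0 1).integrableOn]
  ring

lemma Phi_nonneg (x : ℝ) : 0 ≤ Phi x := cdf_nonneg _ x

lemma Phi_mono : Monotone Phi := monotone_cdf _

open Real Set in
lemma Phi_lower {d : ℝ} (hd : 0 ≤ d) :
    (Real.sqrt (2 * π))⁻¹ * Real.exp (-(d + 1) ^ 2 / 2) ≤ Phi (d + 1) - Phi d := by
  rw [Phi_sub (by linarith)]
  have h1 : ∫ t in Set.Ioc d (d + 1), (Real.sqrt (2 * π))⁻¹ * Real.exp (-(d + 1) ^ 2 / 2)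
      ≤ ∫ t in Set.Ioc d (d + 1), gaussianPDFReal 0 1 t := by
    refine setIntegral_mono_on (integrableOn_const measure_Ioc_lt_top.ne)
      (integrable_gaussianPDFReal 0 1).integrableOn measurableSet_Ioc ?_
    intro t ht
    obtain ⟨ht1, ht2⟩ := ht
    simp only [gaussianPDFReal, NNReal.coe_one, mul_one, sub_zero]
    gcongr
    nlinarith
  calc (Real.sqrt (2 * π))⁻¹ * Real.exp (-(d + 1) ^ 2 / 2)
      = ∫ t in Set.Ioc d (d + 1), (Real.sqrt (2 * π))⁻¹ * Real.exp (-(d + 1) ^ 2 / 2) := by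
        rw [setIntegral_const, Real.volume_real_Ioc]
        simp
    _ ≤ _ := h1

open Real Set in
lemma Phi_upper {e : ℝ} (he : 1 ≤ e) :
    Phi (-e) ≤ (Real.sqrt (2 * π))⁻¹ * Real.exp (-e ^ 2 / 2) := by
  rw [Phi_eq_integral]
  set C : ℝ := (Real.sqrt (2 * π))⁻¹ * Real.exp (-e ^ 2 / 2 + e) with hC
  have hCpos : 0 ≤ C := by positivity
  have h1 : ∫ t in Set.Iic (-e), gaussianPDFReal 0 1 t
      ≤ ∫ t in Set.Iic (-e), C * Real.exp t := by
    refine setIntegral_mono_on (integrable_gaussianPDFReal 0 1).integrableOn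
      ((integrableOn_exp_Iic (-e)).const_mul C) measurableSet_Iic ?_
    intro t ht
    simp only [Set.mem_Iic] at ht
    simp only [gaussianPDFReal, NNReal.coe_one, mul_one, sub_zero, hC]
    rw [mul_assoc, ← Real.exp_add]
    gcongr
    nlinarith [mul_nonneg (by linarith : (0:ℝ) ≤ -(t + e)) (by linarith : (0:ℝ) ≤ -(t - e + 2))]
  have h2 : ∫ t in Set.Iic (-e), C * Real.exp t = C * Real.exp (-e) := by
    rw [integral_const_mul, integral_exp_Iic]
  calc ∫ t in Set.Iic (-e), gaussianPDFReal 0 1 t ≤ C * Real.exp (-e) := h1.trans_eq h2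
    _ = (Real.sqrt (2 * π))⁻¹ * Real.exp (-e ^ 2 / 2) := by
        rw [hC, mul_assoc, ← Real.exp_add]; ring_nf

/-- Lemma 2 (smallVar), part 2: for `c` above the limit cutoff `c**`, with equal
weights the payoff from discovering the consensus project 2 eventually exceeds the
payoff from discovering the disfavored project 1 as precision `μ` grows. -/
theorem consensus_eventually_beats_disfavored
    (σ₁ σ₂ ρ c : ℝ) (hσ₁ : 0 < σ₁) (hσ : σ₁ < σ₂) (hρ : ρ ∈ Set.Ioo (0 : ℝ) 1)
    (hc : c ∈ Set.Ioo (σ₂ / (ρ * σ₁ + 2 * σ₂)) 1) :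
    ∃ M : ℝ, 0 < M ∧ ∀ μ : ℝ, M < μ →
      Phi ((1 - c) * μ / (σ₁ + ρ * σ₂)) + Phi (-c * μ / (ρ * σ₂)) >
        Phi ((1 - c) * μ / (ρ * σ₁ + σ₂)) + Phi (-c * μ / σ₂) := by
  obtain ⟨hρ0, hρ1⟩ := hρ
  obtain ⟨hc1, hc2⟩ := hc
  have hσ₂ : 0 < σ₂ := hσ₁.trans hσ
  have hden : 0 < ρ * σ₁ + 2 * σ₂ := by positivity
  have hcpos : 0 < c := lt_of_le_of_lt (by positivity) hc1
  have h1c : 0 < 1 - c := by linarith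
  have hd1 : 0 < σ₁ + ρ * σ₂ := by positivity
  have hd2 : 0 < ρ * σ₁ + σ₂ := by positivity
  -- cutoff condition: σ₂ < c * (ρσ₁ + 2σ₂)
  have hcut : σ₂ < c * (ρ * σ₁ + 2 * σ₂) := (div_lt_iff₀ hden).mp hc1
  -- κ : gap rate between e and d
  set κ : ℝ := c / σ₂ - (1 - c) / (ρ * σ₁ + σ₂) with hκ
  have hκpos : 0 < κ := by
    rw [hκ, sub_pos, div_lt_div_iff₀ hd2 hσ₂]
    nlinarith
  -- lam : gap rate between a and d
  set lam : ℝ := (1 - c) / (σ₁ + ρ * σ₂) - (1 - c) / (ρ * σ₁ + σ₂) with hlam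
  have hlampos : 0 < lam := by
    rw [hlam, sub_pos, div_lt_div_iff₀ hd2 hd1]
    nlinarith [mul_pos (mul_pos h1c (by linarith : (0:ℝ) < 1 - ρ)) (by linarith : (0:ℝ) < σ₂ - σ₁)]
  refine ⟨max (max (1 / κ) (1 / lam)) (max (σ₂ / c) 1), by positivity, ?_⟩
  intro μ hμ
  have hμ1 : 1 < μ := lt_of_le_of_lt (le_max_of_le_right (le_max_right _ _)) hμ
  have hμpos : 0 < μ := by linarith
  set d : ℝ := (1 - c) * μ / (ρ * σ₁ + σ₂) with hd
  set a : ℝ := (1 - c) * μ / (σ₁ + ρ * σ₂) with ha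
  set e : ℝ := c * μ / σ₂ with he
  have hdpos : 0 ≤ d := by positivity
  have had : d + 1 ≤ a := by
    have h1 : 1 / lam < μ := lt_of_le_of_lt (le_max_of_le_left (le_max_right _ _)) hμ
    have : 1 < lam * μ := (div_lt_iff₀' hlampos).mp h1
    have had : a - d = lam * μ := by rw [ha, hd, hlam]; ring
    linarith
  have hde : d + 1 < e := by
    have h1 : 1 / κ < μ := lt_of_le_of_lt (le_max_of_le_left (le_max_left _ _)) hμ
    have : 1 < κ * μ := (div_lt_iff₀' hκpos).mp h1
    have hed : e - d = κ * μ := by rw [he, hd, hκ]; ring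
    linarith
  have he1 : 1 ≤ e := by linarith
  -- main chain
  have key1 : (Real.sqrt (2 * Real.pi))⁻¹ * Real.exp (-(d + 1) ^ 2 / 2) ≤ Phi (d + 1) - Phi d :=
    Phi_lower hdpos
  have key2 : Phi (-e) ≤ (Real.sqrt (2 * Real.pi))⁻¹ * Real.exp (-e ^ 2 / 2) := Phi_upper he1
  have key3 : Real.exp (-e ^ 2 / 2) < Real.exp (-(d + 1) ^ 2 / 2) := by
    apply Real.exp_lt_exp.2
    nlinarith
  have hsqrt : (0:ℝ) < (Real.sqrt (2 * Real.pi))⁻¹ := by positivity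
  have hmain : Phi d + Phi (-e) < Phi (d + 1) := by
    have := mul_lt_mul_of_pos_left key3 hsqrt
    linarith
  have hPhia : Phi (d + 1) ≤ Phi a := Phi_mono had
  have hneg : -c * μ / σ₂ = -e := by rw [he]; ring
  have hneg2 : 0 ≤ Phi (-c * μ / (ρ * σ₂)) := Phi_nonneg _
  rw [hneg]
  linarith
end
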